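/- Let Ω ⊂ ℝ² be a polygonal domain and c_I > 1. Then there exists a constant c > 0 such that for all h ∈ (0,1/2), one has ∫_Ω ( c_I h² + dist(x, ∂Ω) )^{-1} dx ≤ c |ln h|. -/

import Mathlib

open MeasureTheory Set

local notation "E2" => EuclideanSpace ℝ (Fin 2)

lemma oneD (c M a : ℝ) (hc : 0 < c) (hM : 0 ≤ M) :
    ∫⁻ t in Icc (a - M) (a + M), ENNReal.ofReal ((c + |t - a|)⁻¹)
      ≤ ENNReal.ofReal (2 * Real.log ((c + M) / c)) := by
  have hcont : ContinuousOn (fun t : ℝ => (c + |t - a|)⁻¹) (Icc (a - M) (a + M)) := by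
    apply ContinuousOn.inv₀
    · fun_prop
    · intro t _
      positivity
  have hint : IntegrableOn (fun t : ℝ => (c + |t - a|)⁻¹) (Icc (a - M) (a + M)) :=
    hcont.integrableOn_compact isCompact_Icc
  rw [← ofReal_integral_eq_lintegral_ofReal hint
    (Filter.Eventually.of_forall fun t => by positivity)]
  apply ENNReal.ofReal_le_ofReal
  have h1 : a - M ≤ a + M := by linarith
  rw [MeasureTheory.integral_Icc_eq_integral_Ioc, ← intervalIntegral.integral_of_le h1]
  have hii1 : IntervalIntegrable (fun t : ℝ => (c + |t - a|)⁻¹) volume (a - M) a := by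
    apply ContinuousOn.intervalIntegrable
    apply ContinuousOn.inv₀
    · fun_prop
    · intro t _; positivity
  have hii2 : IntervalIntegrable (fun t : ℝ => (c + |t - a|)⁻¹) volume a (a + M) := by
    apply ContinuousOn.intervalIntegrable
    apply ContinuousOn.inv₀
    · fun_prop
    · intro t _; positivity
  rw [← intervalIntegral.integral_add_adjacent_intervals hii1 hii2]
  have e1 : ∫ t in (a - M)..a, (c + |t - a|)⁻¹ = Real.log ((c + M) / c) := by
    have : ∀ t ∈ uIcc (a - M) a, (c + |t - a|)⁻¹ = ((c + a) - t)⁻¹ := by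
      intro t ht
      rw [uIcc_of_le (by linarith)] at ht
      rw [abs_of_nonpos (by linarith [ht.2])]
      ring_nf
    rw [intervalIntegral.integral_congr this]
    have := intervalIntegral.integral_comp_sub_left (a := a - M) (b := a)
      (f := fun u : ℝ => u⁻¹) (c + a)
    rw [this]
    have : c + a - (a - M) = c + M := by ring
    rw [this]
    have : c + a - a = c := by ring
    rw [this]
    exact integral_inv_of_pos hc (by linarith)
  have e2 : ∫ t in a..(a + M), (c + |t - a|)⁻¹ = Real.log ((c + M) / c) := by
    have : ∀ t ∈ uIcc a (a + M), (c + |t - a|)⁻¹ = (t + (c - a))⁻¹ := by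
      intro t ht
      rw [uIcc_of_le (by linarith)] at ht
      rw [abs_of_nonneg (by linarith [ht.1])]
      ring_nf
    rw [intervalIntegral.integral_congr this]
    have := intervalIntegral.integral_comp_add_right (a := a) (b := a + M)
      (f := fun u : ℝ => u⁻¹) (c - a)
    rw [this]
    have h3 : a + (c - a) = c := by ring
    have h4 : a + M + (c - a) = c + M := by ring
    rw [h3, h4]
    exact integral_inv_of_pos hc (by linarith)
  rw [e1, e2]; linarith

lemma exists_unit_normal (v : E2) : ∃ n : E2, ‖n‖ = 1 ∧ (inner ℝ v n : ℝ) = 0 := by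
  by_cases hv : v = 0
  · exact ⟨EuclideanSpace.single 0 1, by simp [EuclideanSpace.norm_single], by simp [hv]⟩
  · set w : E2 := (WithLp.equiv 2 (Fin 2 → ℝ)).symm ![-(v 1), v 0] with hw
    have hw0 : w 0 = -(v 1) := rfl
    have hw1 : w 1 = v 0 := rfl
    have hnw : ‖w‖ = ‖v‖ := by
      rw [EuclideanSpace.norm_eq, EuclideanSpace.norm_eq]
      congr 1
      rw [Fin.sum_univ_two, Fin.sum_univ_two, hw0, hw1]
      simp [Real.norm_eq_abs, sq_abs]
      ring
    have hvn : ‖v‖ ≠ 0 := norm_ne_zero_iff.mpr hv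
    refine ⟨‖v‖⁻¹ • w, ?_, ?_⟩
    · rw [norm_smul, hnw, norm_inv, norm_norm, inv_mul_cancel₀ hvn]
    · rw [real_inner_smul_right]
      have : (inner ℝ v w : ℝ) = 0 := by
        rw [PiLp.inner_apply, Fin.sum_univ_two, hw0, hw1]
        simp [RCLike.inner_apply]
        ring
      rw [this, mul_zero]

lemma seg_dist_bound (A B x y n : E2) (hn : ‖n‖ = 1) (ho : (inner ℝ n (B - A) : ℝ) = 0)
    (hy : y ∈ segment ℝ A B) : |(inner ℝ n (x - A) : ℝ)| ≤ dist x y := by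
  obtain ⟨s, t, hs, ht, hst, rfl⟩ := hy
  have hxy : x - (s • A + t • B) = (x - A) - t • (B - A) := by
    have hs1 : s = 1 - t := by linarith
    rw [hs1]
    module
  have key : (inner ℝ n (x - (s • A + t • B)) : ℝ) = (inner ℝ n (x - A) : ℝ) := by
    rw [hxy, inner_sub_right, real_inner_smul_right, ho, mul_zero, sub_zero]
  calc |(inner ℝ n (x - A) : ℝ)| = |(inner ℝ n (x - (s • A + t • B)) : ℝ)| := by rw [key]
    _ ≤ ‖n‖ * ‖x - (s • A + t • B)‖ := abs_real_inner_le_norm _ _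
    _ = dist x (s • A + t • B) := by rw [hn, one_mul, dist_eq_norm]

lemma coord_le_norm (y : E2) (j : Fin 2) : |y j| ≤ ‖y‖ := by
  rw [EuclideanSpace.norm_eq]
  have : |y j| = Real.sqrt (‖y j‖ ^ 2) := by
    rw [Real.sqrt_sq_eq_abs, Real.norm_eq_abs, abs_abs]
  rw [this]
  apply Real.sqrt_le_sqrt
  exact Finset.single_le_sum (f := fun i => ‖y i‖ ^ 2) (fun i _ => by positivity) (Finset.mem_univ j)

lemma seg_integral (Ω : Set E2) (R c a : ℝ) (hR : 0 < R) (hc : 0 < c) (ha : |a| ≤ R)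
    (n : E2) (hn : ‖n‖ = 1) (hΩR : Ω ⊆ Metric.closedBall 0 R) :
    ∫⁻ x in Ω, ENNReal.ofReal ((c + |(inner ℝ n x : ℝ) - a|)⁻¹)
      ≤ ENNReal.ofReal (Real.log ((c + 2 * R) / c) * (4 * R)) := by
  -- orthonormal basis with b 0 = n
  have hcard : Module.finrank ℝ E2 = Fintype.card (Fin 2) := by simp
  have horth : Orthonormal ℝ (({0} : Set (Fin 2)).restrict (fun _ : Fin 2 => n)) := by
    rw [orthonormal_iff_ite]
    intro i j
    have hij : i = j := Subtype.ext (by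
      have hi := i.2; have hj := j.2
      simp only [Set.mem_singleton_iff] at hi hj
      rw [hi, hj])
    subst hij
    rw [if_pos rfl]
    show (inner ℝ n n : ℝ) = 1
    rw [real_inner_self_eq_norm_sq, hn, one_pow]
  obtain ⟨b, hb⟩ := horth.exists_orthonormalBasis_extension_of_card_eq hcard
  have hb0 : b 0 = n := hb 0 rfl
  -- the measure preserving equivalence to ℝ × ℝ
  set Φ : E2 ≃ᵐ ℝ × ℝ :=
    (b.measurableEquiv).trans ((MeasurableEquiv.toLp 2 (Fin 2 → ℝ)).symm.trans
      (MeasurableEquiv.finTwoArrow)) with hΦdef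
  have hΦ : MeasurePreserving Φ volume volume := by
    exact ((MeasureTheory.volume_preserving_finTwoArrow ℝ).comp
      (EuclideanSpace.volume_preserving_symm_measurableEquiv_toLp (Fin 2))).comp
      b.measurePreserving_measurableEquiv
  have hΦx : ∀ x : E2, Φ x = (b.repr x 0, b.repr x 1) := fun x => rfl
  set F : ℝ × ℝ → ENNReal := fun p => ENNReal.ofReal ((c + |p.1 - a|)⁻¹) with hF
  have hFm : Measurable F := by
    apply Measurable.ennreal_ofReal
    fun_prop
  have hrepr : ∀ x : E2, b.repr x 0 = (inner ℝ n x : ℝ) := by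
    intro x
    rw [OrthonormalBasis.repr_apply_apply, hb0]
  have hsub : Ω ⊆ Φ ⁻¹' (Icc (-R) R ×ˢ Icc (-R) R) := by
    intro x hx
    have hxR : ‖x‖ ≤ R := by
      simpa [Metric.mem_closedBall, dist_eq_norm] using hΩR hx
    have hcoord : ∀ j, |b.repr x j| ≤ R := fun j =>
      (coord_le_norm (b.repr x) j).trans (by rw [b.repr.norm_map]; exact hxR)
    simp only [Set.mem_preimage, hΦx, Set.mem_prod, Set.mem_Icc]
    exact ⟨abs_le.mp (hcoord 0), abs_le.mp (hcoord 1)⟩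
  calc ∫⁻ x in Ω, ENNReal.ofReal ((c + |(inner ℝ n x : ℝ) - a|)⁻¹)
      ≤ ∫⁻ x in Φ ⁻¹' (Icc (-R) R ×ˢ Icc (-R) R),
          ENNReal.ofReal ((c + |(inner ℝ n x : ℝ) - a|)⁻¹) := lintegral_mono_set hsub
    _ = ∫⁻ x in Φ ⁻¹' (Icc (-R) R ×ˢ Icc (-R) R), F (Φ x) := by
        apply lintegral_congr
        intro x
        rw [hF]
        simp only [hΦx, hrepr]
    _ = ∫⁻ p in Icc (-R) R ×ˢ Icc (-R) R, F p := by
        exact hΦ.setLIntegral_comp_preimage_emb Φ.measurableEmbedding F _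
    _ ≤ ENNReal.ofReal (Real.log ((c + 2 * R) / c) * (4 * R)) := by
        rw [Measure.volume_eq_prod, ← Measure.prod_restrict,
          MeasureTheory.lintegral_prod F hFm.aemeasurable]
        simp only [hF]
        calc ∫⁻ x in Icc (-R) R, ∫⁻ _ in Icc (-R) R, ENNReal.ofReal ((c + |x - a|)⁻¹)
            = ∫⁻ x in Icc (-R) R, ENNReal.ofReal ((c + |x - a|)⁻¹) * volume (Icc (-R) R) := by
              apply lintegral_congr; intro x; rw [setLIntegral_const]
          _ = (∫⁻ x in Icc (-R) R, ENNReal.ofReal ((c + |x - a|)⁻¹)) * volume (Icc (-R) R) := by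
              rw [lintegral_mul_const'']
              fun_prop
          _ ≤ (∫⁻ x in Icc (a - 2 * R) (a + 2 * R), ENNReal.ofReal ((c + |x - a|)⁻¹))
                * volume (Icc (-R) R) := by
              apply mul_le_mul_left
              apply lintegral_mono_set
              apply Icc_subset_Icc
              · cases abs_le.mp ha; linarith
              · cases abs_le.mp ha; linarith
          _ ≤ ENNReal.ofReal (2 * Real.log ((c + 2 * R) / c)) * volume (Icc (-R) R) := by
              exact mul_le_mul_left (oneD c (2 * R) a hc (by linarith)) _
          _ = ENNReal.ofReal (Real.log ((c + 2 * R) / c) * (4 * R)) := by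
              have hlog : 0 ≤ Real.log ((c + 2 * R) / c) :=
                Real.log_nonneg ((one_le_div hc).mpr (by linarith))
              rw [Real.volume_Icc, ← ENNReal.ofReal_mul (by linarith)]
              congr 1
              ring

/-- A polygonal domain: a bounded, connected, open subset of `ℝ²` whose boundary is
a finite union of closed line segments. -/
def IsPolygonalDomain (Ω : Set (EuclideanSpace ℝ (Fin 2))) : Prop :=
  IsOpen Ω ∧ IsConnected Ω ∧ Bornology.IsBounded Ω ∧
    ∃ (n : ℕ) (A B : Fin n → EuclideanSpace ℝ (Fin 2)),
      frontier Ω = ⋃ i, segment ℝ (A i) (B i)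

/-- **Lemma 3.5, second estimate (strengthened to all of `Ω`).**
Let `Ω ⊂ ℝ²` be a polygonal domain and `c_I > 1`. There is `c > 0` such that for all
`h ∈ (0,1/2)`: `∫_Ω (c_I h² + dist(x,∂Ω))⁻¹ dx ≤ c |ln h|`. -/
theorem regularized_distance_integral_estimate (Ω : Set (EuclideanSpace ℝ (Fin 2)))
    (hΩ : IsPolygonalDomain Ω) (cI : ℝ) (hcI : 1 < cI) :
    ∃ c > (0 : ℝ), ∀ h ∈ Set.Ioo (0 : ℝ) (1 / 2),
      ∫⁻ x in Ω,
          ENNReal.ofReal ((cI * h ^ 2 + Metric.infDist x (frontier Ω))⁻¹)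
        ≤ ENNReal.ofReal (c * |Real.log h|) := by
  obtain ⟨hopen, hconn, hbdd, N, A, B, hfr⟩ := hΩ
  -- a radius R ≥ 1 with closure Ω ⊆ closedBall 0 R
  obtain ⟨r, hr⟩ := hbdd.closure.subset_closedBall 0
  set R : ℝ := max r 1 with hRdef
  have hR1 : (1 : ℝ) ≤ R := le_max_right _ _
  have hR : 0 < R := lt_of_lt_of_le one_pos hR1
  have hcl : closure Ω ⊆ Metric.closedBall 0 R :=
    hr.trans (Metric.closedBall_subset_closedBall (le_max_left _ _))
  have hΩR : Ω ⊆ Metric.closedBall 0 R := subset_closure.trans hcl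
  have hfrR : frontier Ω ⊆ Metric.closedBall 0 R := frontier_subset_closure.trans hcl
  -- frontier is nonempty and compact
  have hfne : (frontier Ω).Nonempty := by
    rw [nonempty_iff_ne_empty]
    intro hemp
    have hclopen : IsClopen Ω := isClopen_iff_frontier_eq_empty.mpr hemp
    rcases isClopen_iff.mp hclopen with h1 | h1
    · exact hconn.nonempty.ne_empty h1
    · rw [h1] at hbdd
      exact NormedSpace.unbounded_univ ℝ E2 hbdd
  have hfc : IsCompact (frontier Ω) :=
    Metric.isCompact_of_isClosed_isBounded isClosed_frontier
      (hbdd.closure.subset frontier_subset_closure)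
  -- unit normals
  choose n hn1 hn2 using fun i : Fin N => exists_unit_normal (B i - A i)
  set a : Fin N → ℝ := fun i => (inner ℝ (n i) (A i) : ℝ) with hadef
  have haR : ∀ i, |a i| ≤ R := by
    intro i
    have hAi : A i ∈ Metric.closedBall (0 : E2) R := by
      apply hfrR
      rw [hfr]
      exact Set.mem_iUnion.mpr ⟨i, left_mem_segment ℝ (A i) (B i)⟩
    have : |a i| ≤ ‖n i‖ * ‖A i‖ := abs_real_inner_le_norm _ _
    rw [hn1 i, one_mul] at this
    exact this.trans (by simpa [Metric.mem_closedBall, dist_eq_norm] using hAi)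
  -- constants
  set K : ℝ := Real.log (cI + 2 * R) / Real.log 2 + 2 with hKdef
  have hlogcR : 0 ≤ Real.log (cI + 2 * R) := Real.log_nonneg (by linarith)
  have hK : 0 ≤ K := by
    have h' : 0 ≤ Real.log (cI + 2 * R) / Real.log 2 := by positivity
    rw [hKdef]
    linarith
  refine ⟨N * (K * (4 * R)) + 1, by positivity, ?_⟩
  rintro h ⟨hh0, hh2⟩
  set c : ℝ := cI * h ^ 2 with hcdef
  have hc : 0 < c := by positivity
  have habs : |Real.log h| = -Real.log h := abs_of_neg (Real.log_neg hh0 (by linarith))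
  have hlogh : 0 < |Real.log h| := by
    rw [habs]
    have := Real.log_neg hh0 (by linarith)
    linarith
  -- pointwise bound
  have hpt : ∀ x : E2, ENNReal.ofReal ((c + Metric.infDist x (frontier Ω))⁻¹)
      ≤ ∑ i : Fin N, ENNReal.ofReal ((c + |(inner ℝ (n i) x : ℝ) - a i|)⁻¹) := by
    intro x
    obtain ⟨y, hy, hyd⟩ := hfc.exists_infDist_eq_dist hfne x
    rw [hfr] at hy
    obtain ⟨i, hyi⟩ := Set.mem_iUnion.mp hy
    have hseg : |(inner ℝ (n i) (x - A i) : ℝ)| ≤ dist x y := by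
      apply seg_dist_bound (A i) (B i) x y (n i) (hn1 i) _ hyi
      rw [real_inner_comm]
      exact hn2 i
    have hsub : (inner ℝ (n i) (x - A i) : ℝ) = (inner ℝ (n i) x : ℝ) - a i := by
      rw [inner_sub_right, hadef]
    rw [hsub, ← hyd] at hseg
    have h1 : ENNReal.ofReal ((c + Metric.infDist x (frontier Ω))⁻¹)
        ≤ ENNReal.ofReal ((c + |(inner ℝ (n i) x : ℝ) - a i|)⁻¹) := by
      apply ENNReal.ofReal_le_ofReal
      apply inv_anti₀ (by positivity)
      linarith
    exact h1.trans (Finset.single_le_sum (f := fun i =>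
      ENNReal.ofReal ((c + |(inner ℝ (n i) x : ℝ) - a i|)⁻¹))
      (fun _ _ => zero_le) (Finset.mem_univ i))
  -- main chain
  calc ∫⁻ x in Ω, ENNReal.ofReal ((c + Metric.infDist x (frontier Ω))⁻¹)
      ≤ ∫⁻ x in Ω, ∑ i : Fin N, ENNReal.ofReal ((c + |(inner ℝ (n i) x : ℝ) - a i|)⁻¹) :=
        lintegral_mono fun x => hpt x
    _ = ∑ i : Fin N, ∫⁻ x in Ω, ENNReal.ofReal ((c + |(inner ℝ (n i) x : ℝ) - a i|)⁻¹) := by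
        apply lintegral_finset_sum
        intro i _
        apply Measurable.ennreal_ofReal
        apply Continuous.measurable
        apply Continuous.inv₀
        · exact continuous_const.add
            ((Continuous.inner continuous_const continuous_id).sub continuous_const).abs
        · intro x; positivity
    _ ≤ ∑ _i : Fin N, ENNReal.ofReal (Real.log ((c + 2 * R) / c) * (4 * R)) := by
        apply Finset.sum_le_sum
        intro i _
        exact seg_integral Ω R c (a i) hR hc (haR i) (n i) (hn1 i) hΩR
    _ = (N : ENNReal) * ENNReal.ofReal (Real.log ((c + 2 * R) / c) * (4 * R)) := by
        rw [Finset.sum_const, Finset.card_univ, Fintype.card_fin, nsmul_eq_mul]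
    _ ≤ ENNReal.ofReal ((N * (K * (4 * R)) + 1) * |Real.log h|) := by
        rw [← ENNReal.ofReal_natCast N, ← ENNReal.ofReal_mul (by positivity)]
        apply ENNReal.ofReal_le_ofReal
        -- real-number estimate
        have hL : Real.log ((c + 2 * R) / c) ≤ K * |Real.log h| := by
          have hlog2 : 0 < Real.log 2 := Real.log_pos (by norm_num)
          have hlog2h : Real.log 2 ≤ |Real.log h| := by
            rw [habs, ← Real.log_inv]
            apply Real.log_le_log (by norm_num)
            rw [le_inv_comm₀ (by norm_num) hh0]
            linarith
          have hsq1 : h ^ 2 ≤ 1 := by nlinarith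
          have h1 : Real.log (c + 2 * R) ≤ Real.log (cI + 2 * R) := by
            apply Real.log_le_log (by positivity)
            nlinarith
          have h2 : Real.log c = Real.log cI + 2 * Real.log h := by
            rw [hcdef, Real.log_mul (by positivity) (by positivity), Real.log_pow]
            push_cast
            ring
          have h3 : Real.log (cI + 2 * R) ≤ Real.log (cI + 2 * R) / Real.log 2 * |Real.log h| := by
            rw [div_mul_eq_mul_div, le_div_iff₀ hlog2]
            exact mul_le_mul_of_nonneg_left hlog2h hlogcR
          have h4 : 0 ≤ Real.log cI := Real.log_nonneg (le_of_lt hcI)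
          rw [Real.log_div (by positivity) (ne_of_gt hc), h2, hKdef]
          rw [habs] at h3 ⊢
          nlinarith
        have h5 : Real.log ((c + 2 * R) / c) * (4 * R) ≤ K * |Real.log h| * (4 * R) :=
          mul_le_mul_of_nonneg_right hL (by positivity)
        have h6 : (N : ℝ) * (Real.log ((c + 2 * R) / c) * (4 * R))
            ≤ (N : ℝ) * (K * (4 * R)) * |Real.log h| := by
          calc (N : ℝ) * (Real.log ((c + 2 * R) / c) * (4 * R))
              ≤ (N : ℝ) * (K * |Real.log h| * (4 * R)) :=
                mul_le_mul_of_nonneg_left h5 (Nat.cast_nonneg N)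
            _ = (N : ℝ) * (K * (4 * R)) * |Real.log h| := by ring
        nlinarith [hlogh.le]
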